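/- Let R be a principal ideal domain with a ring automorphism σ such that for every irreducible z ∈ R and every n ≥ 1, σ^n(z) is not an associate of z. Let a ∈ R be nonzero, let d be the number of irreducible factors of a counted with multiplicity, let p be a divisor of a, and set q = σ(a/p). Then every strictly increasing chain I₀ ⊊ I₁ ⊊ ⋯ ⊊ I_m of (p,q)-invariant ideals of R satisfies 4·(m − 1) ≤ d². -/

import Mathlib

/-!
For an irreducible `x` let `v_x(w)` be the number of factors of `w` associated to `x`. If the
ideal `(w) ≠ 0` is `(p,q)`-invariant, then `v_x(w) ≤ v_{σx}(w) + v_x(p)` and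
`v_{σx}(w) ≤ v_x(w) + v_{σx}(q)`. Since `σ`-orbits of irreducibles are infinite, `v_{σⁿx}(w) = 0`
for some `n ≥ 0`, so for `c ≤ v_x(w)` the first inequality supplies at least `c` factors of `p`
at `x, σx, σ²x, …`; the `c`-th of them is charged to `(x, c)`. Going backwards along the orbit,
`(x, c)` is charged to a factor of `q` as well. If `(x, c)` and `(x', c')` are charged to the same
two factors, then `c = c'` and `x' ∼ σᵟx` where `p` has no factors at `x, …, σᵟ⁻¹x` and `q` none
at `σx, …, σᵟx`, so the two inequalities force `v_x(w) = v_{x'}(w)` for every invariant `w`.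
Each strict step `(w_j) ⊊ (w_{j+1})` between nonzero ideals of the chain gives some `x` with
`v_x(w_{j+1}) < c := v_x(w_j)`, and distinct steps are charged to distinct pairs. Hence
`m - 1 ≤ #p · #q ≤ (#p + #q)² / 4 = d² / 4`.
-/

def PQInvariant {R : Type*} [CommRing R] (σ : R ≃+* R) (p q : R) (I : Ideal R) : Prop :=
  ∀ i ∈ I, σ⁻¹ i * p ∈ I ∧ σ i * q ∈ I

open UniqueFactorizationMonoid

theorem exists_lt_le_succ_of_lt_of_le {β : Type*} [LinearOrder β] {f : ℕ → β} {c : β}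
    (h0 : f 0 < c) {M : ℕ} (hM : c ≤ f M) : ∃ N, f N < c ∧ c ≤ f (N + 1) := by
  induction M with
  | zero => exact absurd hM (not_le.2 h0)
  | succ M ih => exact (lt_or_ge (f M) c).elim (fun h => ⟨M, h, hM⟩) ih

section Factors

variable {α β : Type*} [CommMonoidWithZero α] [UniqueFactorizationMonoid α]
  [CommMonoidWithZero β] [UniqueFactorizationMonoid β]

theorem card_factors_mul {x y : α} (hx : x ≠ 0) (hy : y ≠ 0) :
    Multiset.card (factors (x * y)) = Multiset.card (factors x) + Multiset.card (factors y) := by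
  rw [Multiset.card_eq_card_of_rel (factors_mul hx hy), Multiset.card_add]

theorem card_factors_map {F : Type*} [EquivLike F α β] [MulEquivClass F α β] (f : F) {x : α}
    (hx : x ≠ 0) : Multiset.card (factors (f x)) = Multiset.card (factors x) := by
  have hfx : f x ≠ 0 := by simpa using hx
  have hrel : Multiset.Rel Associated (factors (f x)) ((factors x).map f) := by
    refine factors_unique irreducible_of_factor ?_ ?_
    · simpa using fun y hy => (irreducible_of_factor y hy).map f
    · rw [← map_multiset_prod]
      exact (factors_prod hfx).trans ((factors_prod hx).map f).symm
  rw [Multiset.card_eq_card_of_rel hrel, Multiset.card_map]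

end Factors

namespace RingEquiv

variable {R : Type*} [CommRing R] (σ : R ≃+* R)

theorem pow_add_apply (m n : ℕ) (x : R) : (σ ^ (m + n)) x = (σ ^ m) ((σ ^ n) x) := by
  rw [pow_add]; rfl

theorem pow_succ_apply (n : ℕ) (x : R) : (σ ^ (n + 1)) x = σ ((σ ^ n) x) := by
  rw [pow_succ']; rfl

theorem inv_pow_apply_pow_apply (n : ℕ) (x : R) : (σ⁻¹ ^ n) ((σ ^ n) x) = x := by
  rw [inv_pow]; exact (σ ^ n).symm_apply_apply x

theorem associated_of_associated_apply {x y : R} (h : Associated (σ x) (σ y)) :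
    Associated x y := by
  simpa using h.map σ.symm

end RingEquiv

section Orbits

variable {R : Type*} [CommRing R]

def AperiodicOnIrreducibles (σ : R ≃+* R) : Prop :=
  ∀ z : R, Irreducible z → ∀ n : ℕ, 1 ≤ n → ¬ Associated ((σ ^ n) z) z

variable {σ : R ≃+* R}

theorem AperiodicOnIrreducibles.inv (h : AperiodicOnIrreducibles σ) :
    AperiodicOnIrreducibles σ⁻¹ := fun z hz n hn hassoc =>
  h z hz n hn (by simpa [RingEquiv.inv_pow_apply_pow_apply] using (hassoc.map (σ ^ n)).symm)

theorem AperiodicOnIrreducibles.eq_of_associated (h : AperiodicOnIrreducibles σ) {y : R}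
    (hy : Irreducible y) {m n : ℕ} (hmn : Associated ((σ ^ m) y) ((σ ^ n) y)) : m = n := by
  wlog hle : m ≤ n generalizing m n
  · exact (this hmn.symm (le_of_not_ge hle)).symm
  obtain ⟨k, rfl⟩ := Nat.exists_eq_add_of_le hle
  rw [RingEquiv.pow_add_apply] at hmn
  have hk := (σ ^ m).associated_of_associated_apply hmn
  by_contra hne
  exact h y hy k (by omega) hk.symm

end Orbits

section FactorCount

variable {α : Type*} [CommMonoidWithZero α] [UniqueFactorizationMonoid α]
  [NormalizationMonoid α] [DecidableEq α]

noncomputable def factorCount (x w : α) : ℕ :=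
  (normalizedFactors w).count (normalize x)

theorem factorCount_congr_left {x x' : α} (h : Associated x x') (w : α) :
    factorCount x w = factorCount x' w := by
  rw [factorCount, factorCount, normalize_eq_normalize_iff_associated.2 h]

theorem factorCount_mul (x : α) {w w' : α} (hw : w ≠ 0) (hw' : w' ≠ 0) :
    factorCount x (w * w') = factorCount x w + factorCount x w' := by
  rw [factorCount, normalizedFactors_mul hw hw', Multiset.count_add]
  rfl

theorem factorCount_le_of_dvd (x : α) {w w' : α} (h : w ∣ w') (hw' : w' ≠ 0) :
    factorCount x w ≤ factorCount x w' := by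
  obtain ⟨u, rfl⟩ := h
  rw [factorCount_mul x (left_ne_zero_of_mul hw') (right_ne_zero_of_mul hw')]
  exact Nat.le_add_right _ _

theorem one_le_factorCount {x w : α} (hx : Irreducible x) (hw : w ≠ 0) (h : x ∣ w) :
    1 ≤ factorCount x w := by
  obtain ⟨e, he, hassoc⟩ := exists_mem_normalizedFactors_of_dvd hw hx h
  rw [factorCount, normalize_eq_normalize_iff_associated.2 hassoc,
    normalize_normalized_factor e he]
  exact Multiset.one_le_count_iff_mem.2 he

theorem factorCount_map {F : Type*} [EquivLike F α α] [MulEquivClass F α α] (τ : F) {x w : α}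
    (hx : Irreducible x) (hw : w ≠ 0) :
    factorCount (τ x) (τ w) = factorCount x w := by
  rw [factorCount, factorCount, ← multiplicity_eq_count_normalizedFactors hx hw,
    ← multiplicity_eq_count_normalizedFactors (hx.map τ) (by simpa using hw),
    multiplicity_map_eq]

theorem exists_factorCount_lt {w w' : α} (hw : w ≠ 0) (hdvd : w' ∣ w) (hndvd : ¬ w ∣ w') :
    ∃ y, Irreducible y ∧ factorCount y w' < factorCount y w := by
  obtain ⟨u, rfl⟩ := hdvd
  have hu0 : u ≠ 0 := right_ne_zero_of_mul hw
  have hu : ¬ IsUnit u := fun hu => hndvd (hu.mul_right_dvd.2 dvd_rfl)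
  obtain ⟨y, hy, hyu⟩ := WfDvdMonoid.exists_irreducible_factor hu hu0
  refine ⟨y, hy, ?_⟩
  rw [factorCount_mul y (left_ne_zero_of_mul hw) hu0]
  have := one_le_factorCount hy hu0 hyu
  omega

end FactorCount

section Invariance

variable {R : Type*} [CommRing R] [UniqueFactorizationMonoid R] [NormalizationMonoid R]
  [DecidableEq R] {σ : R ≃+* R} {b p q w : R}

theorem factorCount_le_factorCount_apply_add (hb : b ≠ 0) (hw : w ≠ 0) (hdvd : w ∣ σ⁻¹ w * b)
    {x : R} (hx : Irreducible x) : factorCount x w ≤ factorCount (σ x) w + factorCount x b := by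
  have hw' : σ⁻¹ w ≠ 0 := by simpa using hw
  calc factorCount x w ≤ factorCount x (σ⁻¹ w * b) :=
        factorCount_le_of_dvd x hdvd (mul_ne_zero hw' hb)
    _ = factorCount (σ x) (σ (σ⁻¹ w)) + factorCount x b := by
        rw [factorCount_mul x hw' hb, factorCount_map σ hx hw']
    _ = factorCount (σ x) w + factorCount x b := by
        rw [show σ (σ⁻¹ w) = w from σ.apply_symm_apply w]

theorem factorCount_apply_eq_of_factorCount_eq_zero (hp : p ≠ 0) (hq : q ≠ 0) (hw : w ≠ 0)
    (hdp : w ∣ σ⁻¹ w * p) (hdq : w ∣ σ w * q) {x : R} (hx : Irreducible x)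
    (hpx : factorCount x p = 0) (hqx : factorCount (σ x) q = 0) :
    factorCount (σ x) w = factorCount x w := by
  have hdq' : w ∣ σ⁻¹⁻¹ w * q := by rwa [inv_inv]
  have hforward := factorCount_le_factorCount_apply_add hp hw hdp hx
  have hbackward := factorCount_le_factorCount_apply_add hq hw hdq' (hx.map σ)
  rw [show σ⁻¹ (σ x) = x from σ.symm_apply_apply x] at hbackward
  omega

theorem AperiodicOnIrreducibles.exists_factorCount_eq_zero (horb : AperiodicOnIrreducibles σ)
    {y : R} (hy : Irreducible y) (w : R) : ∃ N, factorCount ((σ ^ N) y) w = 0 := by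
  have hinj : Function.Injective fun n : ℕ => normalize ((σ ^ n) y) := fun m n hmn =>
    horb.eq_of_associated hy (normalize_eq_normalize_iff_associated.1 hmn)
  obtain ⟨_, ⟨N, rfl⟩, hN⟩ :=
    (Set.infinite_range_of_injective hinj).exists_notMem_finset (normalizedFactors w).toFinset
  exact ⟨N, Multiset.count_eq_zero.2 fun h => hN (Multiset.mem_toFinset.2 h)⟩

noncomputable def orbitSum (σ : R ≃+* R) (b y : R) (N : ℕ) : ℕ :=
  ∑ n ∈ Finset.range N, factorCount ((σ ^ n) y) b

theorem orbitSum_succ (σ : R ≃+* R) (b y : R) (N : ℕ) :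
    orbitSum σ b y (N + 1) = orbitSum σ b y N + factorCount ((σ ^ N) y) b :=
  Finset.sum_range_succ _ _

theorem orbitSum_add (σ : R ≃+* R) (b y : R) (M N : ℕ) :
    orbitSum σ b y (M + N) = orbitSum σ b y M + orbitSum σ b ((σ ^ M) y) N := by
  rw [orbitSum, orbitSum, orbitSum, Finset.sum_range_add]
  congr 1
  refine Finset.sum_congr rfl fun n _ => ?_
  rw [add_comm, RingEquiv.pow_add_apply]

theorem orbitSum_succ' (σ : R ≃+* R) (b y : R) (N : ℕ) :
    orbitSum σ b y (N + 1) = factorCount y b + orbitSum σ b (σ y) N := by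
  rw [add_comm, orbitSum_add, pow_one]
  simp [orbitSum]

theorem orbitSum_congr {y y' : R} (h : Associated y y') (N : ℕ) :
    orbitSum σ b y N = orbitSum σ b y' N :=
  Finset.sum_congr rfl fun n _ => factorCount_congr_left (h.map (σ ^ n)) b

theorem factorCount_le_factorCount_pow_apply_add_orbitSum (hb : b ≠ 0) (hw : w ≠ 0)
    (hdvd : w ∣ σ⁻¹ w * b) {y : R} (hy : Irreducible y) (N : ℕ) :
    factorCount y w ≤ factorCount ((σ ^ N) y) w + orbitSum σ b y N := by
  induction N with
  | zero => simp [orbitSum]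
  | succ N ih =>
    have hstep := factorCount_le_factorCount_apply_add hb hw hdvd (hy.map (σ ^ N))
    rw [← RingEquiv.pow_succ_apply] at hstep
    rw [orbitSum_succ]
    omega

/-- Listing the factors of `b` at `y, σ y, σ² y, …` in this order, the `c`-th one (counting from
`1`) is copy number `z.2` (counting from `0`) of `z.1 = normalize (σᴺ y)`. -/
def IsOrbitCell (σ : R ≃+* R) (b y : R) (c : ℕ) (z : R × ℕ) : Prop :=
  ∃ N, normalize ((σ ^ N) y) = z.1 ∧ orbitSum σ b y N + z.2 + 1 = c

theorem AperiodicOnIrreducibles.exists_isOrbitCell (horb : AperiodicOnIrreducibles σ)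
    (hb : b ≠ 0) (hw : w ≠ 0) (hdvd : w ∣ σ⁻¹ w * b) {y : R} (hy : Irreducible y) {c : ℕ}
    (hc : 0 < c) (hcw : c ≤ factorCount y w) :
    ∃ z ∈ (normalizedFactors b).toEnumFinset, IsOrbitCell σ b y c z := by
  obtain ⟨M, hM⟩ := horb.exists_factorCount_eq_zero hy w
  have hcM := factorCount_le_factorCount_pow_apply_add_orbitSum hb hw hdvd hy M
  obtain ⟨N, hlt, hle⟩ := exists_lt_le_succ_of_lt_of_le (f := orbitSum σ b y)
    (by simpa [orbitSum] using hc) (M := M) (by omega)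
  rw [orbitSum_succ] at hle
  refine ⟨(normalize ((σ ^ N) y), c - 1 - orbitSum σ b y N), ?_, N, rfl, by simp only; omega⟩
  rw [Multiset.mem_toEnumFinset]
  change _ < factorCount _ _
  omega

theorem IsOrbitCell.exists_associated {y y' : R} {c c' : ℕ} {z : R × ℕ}
    (h : IsOrbitCell σ b y c z) (h' : IsOrbitCell σ b y' c' z) :
    ∃ δ, Associated ((σ ^ δ) y) y' ∨ Associated ((σ ^ δ) y') y := by
  obtain ⟨N, hN, -⟩ := h
  obtain ⟨N', hN', -⟩ := h'
  have hassoc := normalize_eq_normalize_iff_associated.1 (hN.trans hN'.symm)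
  rcases le_total N' N with hle | hle
  · obtain ⟨δ, rfl⟩ := Nat.exists_eq_add_of_le hle
    rw [RingEquiv.pow_add_apply] at hassoc
    exact ⟨δ, .inl ((σ ^ N').associated_of_associated_apply hassoc)⟩
  · obtain ⟨δ, rfl⟩ := Nat.exists_eq_add_of_le hle
    rw [RingEquiv.pow_add_apply] at hassoc
    exact ⟨δ, .inr ((σ ^ N).associated_of_associated_apply hassoc.symm)⟩

theorem IsOrbitCell.eq_orbitSum_add (horb : AperiodicOnIrreducibles σ) {y y' : R}
    (hy : Irreducible y) {δ : ℕ} (hδ : Associated ((σ ^ δ) y) y') {c c' : ℕ} {z : R × ℕ}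
    (h : IsOrbitCell σ b y c z) (h' : IsOrbitCell σ b y' c' z) :
    c = orbitSum σ b y δ + c' := by
  obtain ⟨N, hN, rfl⟩ := h
  obtain ⟨N', hN', rfl⟩ := h'
  have hNN' : N = N' + δ := by
    refine horb.eq_of_associated hy ?_
    rw [RingEquiv.pow_add_apply]
    exact (normalize_eq_normalize_iff_associated.1 (hN.trans hN'.symm)).trans (hδ.map _).symm
  rw [hNN', add_comm N', orbitSum_add, orbitSum_congr hδ]
  omega

theorem factorCount_pow_apply_eq_of_orbitSum_eq_zero (hp : p ≠ 0) (hq : q ≠ 0) (hw : w ≠ 0)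
    (hdp : w ∣ σ⁻¹ w * p) (hdq : w ∣ σ w * q) {y : R} (hy : Irreducible y) (δ : ℕ)
    (hP : orbitSum σ p y δ = 0) (hQ : orbitSum σ⁻¹ q ((σ ^ δ) y) δ = 0) :
    factorCount ((σ ^ δ) y) w = factorCount y w := by
  induction δ with
  | zero => rfl
  | succ δ ih =>
    rw [orbitSum_succ] at hP
    rw [orbitSum_succ', RingEquiv.pow_succ_apply] at hQ
    change _ + orbitSum σ⁻¹ q (σ.symm (σ _)) δ = 0 at hQ
    rw [σ.symm_apply_apply] at hQ
    rw [RingEquiv.pow_succ_apply, factorCount_apply_eq_of_factorCount_eq_zero hp hq hw hdp hdq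
      (hy.map _) (by omega) (by omega), ih (by omega) (by omega)]

theorem IsOrbitCell.eq_and_factorCount_eq_of_associated (horb : AperiodicOnIrreducibles σ)
    (hp : p ≠ 0) (hq : q ≠ 0) {y y' : R} (hy : Irreducible y) (hy' : Irreducible y') {δ : ℕ}
    (hδ : Associated ((σ ^ δ) y) y') {c c' : ℕ} {z z' : R × ℕ}
    (hP : IsOrbitCell σ p y c z) (hP' : IsOrbitCell σ p y' c' z)
    (hQ : IsOrbitCell σ⁻¹ q y c z') (hQ' : IsOrbitCell σ⁻¹ q y' c' z') :
    c = c' ∧ ∀ w ≠ 0, w ∣ σ⁻¹ w * p → w ∣ σ w * q → factorCount y w = factorCount y' w := by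
  have hδ' : Associated ((σ⁻¹ ^ δ) y') y := by
    simpa only [RingEquiv.inv_pow_apply_pow_apply] using (hδ.map (σ⁻¹ ^ δ)).symm
  have hc := hP.eq_orbitSum_add horb hy hδ hP'
  have hc' := hQ'.eq_orbitSum_add horb.inv hy' hδ' hQ
  refine ⟨by omega, fun w hw hdp hdq => ?_⟩
  rw [← factorCount_congr_left hδ, factorCount_pow_apply_eq_of_orbitSum_eq_zero hp hq hw hdp hdq
    hy δ (by omega) (by rw [orbitSum_congr hδ]; omega)]

theorem IsOrbitCell.eq_and_factorCount_eq (horb : AperiodicOnIrreducibles σ)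
    (hp : p ≠ 0) (hq : q ≠ 0) {y y' : R} (hy : Irreducible y) (hy' : Irreducible y')
    {c c' : ℕ} {z z' : R × ℕ}
    (hP : IsOrbitCell σ p y c z) (hP' : IsOrbitCell σ p y' c' z)
    (hQ : IsOrbitCell σ⁻¹ q y c z') (hQ' : IsOrbitCell σ⁻¹ q y' c' z') :
    c = c' ∧ ∀ w ≠ 0, w ∣ σ⁻¹ w * p → w ∣ σ w * q → factorCount y w = factorCount y' w := by
  obtain ⟨δ, hδ | hδ⟩ := hP.exists_associated hP'
  · exact hP.eq_and_factorCount_eq_of_associated horb hp hq hy hy' hδ hP' hQ hQ'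
  · obtain ⟨hc, hw⟩ := hP'.eq_and_factorCount_eq_of_associated horb hp hq hy' hy hδ hP hQ' hQ
    exact ⟨hc.symm, fun w h0 hdp hdq => (hw w h0 hdp hdq).symm⟩

end Invariance

section Chains

variable {R : Type*} [CommRing R] [UniqueFactorizationMonoid R] {σ : R ≃+* R} {p q : R}

theorem le_card_factors_mul_of_strictMono_span (horb : AperiodicOnIrreducibles σ) (hp : p ≠ 0)
    (hq : q ≠ 0) {n : ℕ} (g : Fin (n + 1) → R) (hg : StrictMono fun j => Ideal.span {g j})
    (hg0 : ∀ j, g j ≠ 0) (hinv : ∀ j, g j ∣ σ⁻¹ (g j) * p ∧ g j ∣ σ (g j) * q) :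
    n ≤ Multiset.card (factors p) * Multiset.card (factors q) := by
  classical
  let := UniqueFactorizationMonoid.strongNormalizationMonoid (α := R)
  have hdvd {i j} (hij : i ≤ j) : g j ∣ g i :=
    Ideal.span_singleton_le_span_singleton.1 (hg.monotone hij)
  have hjump (j : Fin n) : ∃ y, Irreducible y ∧
      factorCount y (g j.succ) < factorCount y (g j.castSucc) :=
    exists_factorCount_lt (hg0 _) (hdvd j.castSucc_lt_succ.le)
      fun h => (hg j.castSucc_lt_succ).not_ge (Ideal.span_singleton_le_span_singleton.2 h)
  choose y hy hlt using hjump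
  have hcellP (j : Fin n) : ∃ z ∈ (normalizedFactors p).toEnumFinset,
      IsOrbitCell σ p (y j) (factorCount (y j) (g j.castSucc)) z :=
    horb.exists_isOrbitCell hp (hg0 _) (hinv _).1 (hy j) (Nat.zero_lt_of_lt (hlt j)) le_rfl
  have hcellQ (j : Fin n) : ∃ z ∈ (normalizedFactors q).toEnumFinset,
      IsOrbitCell σ⁻¹ q (y j) (factorCount (y j) (g j.castSucc)) z :=
    horb.inv.exists_isOrbitCell hq (hg0 _) (by rw [inv_inv]; exact (hinv _).2) (hy j)
      (Nat.zero_lt_of_lt (hlt j)) le_rfl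
  choose zP hzP hP using hcellP
  choose zQ hzQ hQ using hcellQ
  -- equal charges at steps `i < j` would give `y i`, at step `j`, the height it lost at step `i`
  have hinj : Function.Injective fun j => (zP j, zQ j) := by
    refine Function.Injective.of_lt_imp_ne fun i j hij heq => ?_
    obtain ⟨hzPij, hzQij⟩ : zP i = zP j ∧ zQ i = zQ j := Prod.ext_iff.1 heq
    obtain ⟨hc, hyij⟩ := (hP i).eq_and_factorCount_eq horb hp hq (hy i) (hy j)
      (by rw [hzPij]; exact hP j) (hQ i) (by rw [hzQij]; exact hQ j)
    have hle := factorCount_le_of_dvd (y i) (hdvd (Fin.succ_le_castSucc_iff.2 hij)) (hg0 _)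
    have hyj := hyij _ (hg0 j.castSucc) (hinv _).1 (hinv _).2
    have := hlt i
    omega
  calc n = Finset.card (Finset.univ : Finset (Fin n)) := by simp
    _ ≤ ((normalizedFactors p).toEnumFinset ×ˢ (normalizedFactors q).toEnumFinset).card :=
        Finset.card_le_card_of_injOn _ (fun j _ => Finset.mem_product.2 ⟨hzP j, hzQ j⟩)
          hinj.injOn
    _ = Multiset.card (factors p) * Multiset.card (factors q) := by
        simp [Finset.card_product, Multiset.card_toEnumFinset, normalizedFactors]

end Chains

section PrincipalIdealRing

variable {R : Type*} [CommRing R] {σ : R ≃+* R} {p q : R}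

open Submodule.IsPrincipal in
theorem PQInvariant.generator_dvd {I : Ideal R} [I.IsPrincipal] (h : PQInvariant σ p q I) :
    generator I ∣ σ⁻¹ (generator I) * p ∧ generator I ∣ σ (generator I) * q :=
  (h _ (generator_mem I)).imp (mem_iff_generator_dvd I).1 (mem_iff_generator_dvd I).1

theorem le_card_factors_mul_of_strictMono_pqInvariant [IsDomain R] [IsPrincipalIdealRing R]
    (horb : AperiodicOnIrreducibles σ) (hp : p ≠ 0) (hq : q ≠ 0) {n : ℕ}
    (I : Fin (n + 1) → Ideal R) (hI : StrictMono I) (hbot : ∀ j, I j ≠ ⊥)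
    (hinv : ∀ j, PQInvariant σ p q (I j)) :
    n ≤ Multiset.card (factors p) * Multiset.card (factors q) :=
  le_card_factors_mul_of_strictMono_span horb hp hq
    (fun j => Submodule.IsPrincipal.generator (I j))
    (by simpa only [Ideal.span_singleton_generator] using hI)
    (fun j => mt (Submodule.IsPrincipal.eq_bot_iff_generator_eq_zero _).2 (hbot j))
    fun j => (hinv j).generator_dvd

end PrincipalIdealRing

/-- Uniform bound on the lengths of all rank-one `R`-free modules over
the GWA `R(σ,a)`: if all `σ`-orbits of irreducibles are infinite, `a ≠ 0` has `d`
irreducible factors (with multiplicity), `p ∣ a` and `q = σ(a/p)`, then every strictly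
increasing chain `I₀ ⊊ ⋯ ⊊ I_m` of `(p,q)`-invariant ideals satisfies
`4(m − 1) ≤ d²`. -/
theorem stmt_11 {R : Type*} [CommRing R] [IsDomain R] [IsPrincipalIdealRing R]
    (σ : R ≃+* R)
    (horb : ∀ z : R, Irreducible z → ∀ n : ℕ, 1 ≤ n → ¬ Associated ((σ ^ n) z) z)
    (a : R) (ha : a ≠ 0)
    (d : ℕ) (hd : d = Multiset.card (UniqueFactorizationMonoid.factors a))
    (p r : R) (hpr : a = p * r)
    (m : ℕ) (I : Fin (m + 1) → Ideal R)
    (hchain : StrictMono I) (hinv : ∀ j, PQInvariant σ p (σ r) (I j)) :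
    4 * (m - 1) ≤ d ^ 2 := by
  subst hpr
  have hp : p ≠ 0 := left_ne_zero_of_mul ha
  have hr : r ≠ 0 := right_ne_zero_of_mul ha
  have hlen : m - 1 ≤ Multiset.card (factors p) * Multiset.card (factors (σ r)) := by
    cases m with
    | zero => exact Nat.zero_le _
    | succ k =>
      exact le_card_factors_mul_of_strictMono_pqInvariant horb hp (by simpa using hr)
        (I ∘ Fin.succ) (hchain.comp (Fin.strictMono_succ))
        (fun j => (bot_le.trans_lt (hchain j.succ_pos)).ne') fun j => hinv j.succ
  have hd' : d = Multiset.card (factors p) + Multiset.card (factors (σ r)) := by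
    rw [hd, card_factors_mul hp hr, card_factors_map σ hr]
  calc 4 * (m - 1) ≤ 4 * Multiset.card (factors p) * Multiset.card (factors (σ r)) := by
        rw [mul_assoc]; exact Nat.mul_le_mul_left 4 hlen
    _ ≤ d ^ 2 := hd' ▸ four_mul_le_sq_add _ _
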